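/- arXiv:2302.13014 — 3 statements merged into one kernel-verified Lean document; each statement's English description precedes it below -/
import Mathlib

section
/- Let n ≥ 5 and let P be a pot such that C_min(P) = {W_n} (up to isomorphism). Then in any assembly of W_n from P, each bond-edge type appears on at most two of the n−1 edges of the outer cycle. -/
/-!
Basic framework for flexible-tile DNA self-assembly.

Bond-edge types are elements of `Fin m`.  A cohesive end is either unhatted
(`Sum.inl a`) or hatted (`Sum.inr a`).  A tile is a finite multiset of cohesive
ends, and a pot is a finite set of tiles.
-/

/-- A tile over the bond-edge alphabet `Fin m`. -/
abbrev Tile (m : ℕ) : Type := Multiset (Fin m ⊕ Fin m)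

/-- A pot: a finite set of tiles over the alphabet `Fin m`. -/
abbrev Pot (m : ℕ) : Type := Finset (Tile m)

/-- A finite multigraph (nonempty finite vertex set, finite edge set; loops and
parallel edges allowed), edges recorded by their unordered pair of endpoints. -/
structure Multigraph where
  V : Type
  E : Type
  [fintypeV : Fintype V]
  [decEqV : DecidableEq V]
  [nonemptyV : Nonempty V]
  [fintypeE : Fintype E]
  ends : E → Sym2 V

attribute [instance] Multigraph.fintypeV Multigraph.decEqV
  Multigraph.nonemptyV Multigraph.fintypeE

/-- The order (number of vertices) of a multigraph. -/
def Multigraph.order (G : Multigraph) : ℕ := Fintype.card G.V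

/-- An assembly of `G` from tiles over `Fin m`: each edge gets an orientation
(an ordered pair of vertices compatible with its endpoints) and a bond-edge type. -/
structure Assembly (m : ℕ) (G : Multigraph) where
  orient : G.E → G.V × G.V
  label : G.E → Fin m
  orient_ends : ∀ e : G.E, G.ends e = s((orient e).1, (orient e).2)

/-- The tile of a vertex `v` under an assembly: one unhatted `a` for each edge
labeled `a` oriented out of `v`, one hatted `a` for each edge labeled `a`
oriented into `v`. -/
def Assembly.tileOf {m : ℕ} {G : Multigraph} (A : Assembly m G) (v : G.V) : Tile m :=
  (Finset.univ : Finset G.E).val.bind fun e =>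
    (if (A.orient e).1 = v then {Sum.inl (A.label e)} else 0) +
    (if (A.orient e).2 = v then {Sum.inr (A.label e)} else 0)

/-- `G` is realized by the pot `P`: there is an assembly of `G` all of whose
vertex tiles belong to `P`. -/
def Realizes {m : ℕ} (P : Pot m) (G : Multigraph) : Prop :=
  ∃ A : Assembly m G, ∀ v : G.V, A.tileOf v ∈ P

/-- `C(P)`: the class of multigraphs realized by `P`. -/
def CSet {m : ℕ} (P : Pot m) : Set Multigraph := {G | Realizes P G}

/-- `m_P`: the minimum order of a multigraph realized by `P`. -/
noncomputable def mP {m : ℕ} (P : Pot m) : ℕ :=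
  sInf {n | ∃ G ∈ CSet P, G.order = n}

/-- `C_min(P)`: the multigraphs realized by `P` of minimum order. -/
def Cmin {m : ℕ} (P : Pot m) : Set Multigraph :=
  {G ∈ CSet P | G.order = mP P}

/-- An isomorphism of multigraphs. -/
structure MultigraphIso (G H : Multigraph) where
  vEquiv : G.V ≃ H.V
  eEquiv : G.E ≃ H.E
  ends_eq : ∀ e : G.E, H.ends (eEquiv e) = (G.ends e).map vEquiv

/-- Two multigraphs are isomorphic. -/
def Isomorphic (G H : Multigraph) : Prop := Nonempty (MultigraphIso G H)

/-- Scenario 1: minimum number of tile types over all pots realizing `G`. -/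
noncomputable def T1 (G : Multigraph) : ℕ :=
  sInf {c | ∃ m : ℕ, ∃ P : Pot m, Realizes P G ∧ P.card = c}

/-- Scenario 1: minimum number of bond-edge types over all pots realizing `G`. -/
noncomputable def B1 (G : Multigraph) : ℕ :=
  sInf {m | ∃ P : Pot m, Realizes P G}

/-- Scenario 2: minimum number of tile types over pots `P` with `G ∈ C(P)` and
`m_P = |V(G)|`. -/
noncomputable def T2 (G : Multigraph) : ℕ :=
  sInf {c | ∃ m : ℕ, ∃ P : Pot m, Realizes P G ∧ mP P = G.order ∧ P.card = c}

/-- Scenario 2: minimum number of bond-edge types over pots `P` with `G ∈ C(P)`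
and `m_P = |V(G)|`. -/
noncomputable def B2 (G : Multigraph) : ℕ :=
  sInf {m | ∃ P : Pot m, Realizes P G ∧ mP P = G.order}

/-- Scenario 3: minimum number of tile types over pots `P` with `C_min(P)`
consisting exactly of the multigraphs isomorphic to `G`. -/
noncomputable def T3 (G : Multigraph) : ℕ :=
  sInf {c | ∃ m : ℕ, ∃ P : Pot m, Cmin P = {H | Isomorphic H G} ∧ P.card = c}

/-- Scenario 3: minimum number of bond-edge types over pots `P` with `C_min(P)`
consisting exactly of the multigraphs isomorphic to `G`. -/
noncomputable def B3 (G : Multigraph) : ℕ :=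
  sInf {m | ∃ P : Pot m, Cmin P = {H | Isomorphic H G}}

/-- The degree of a vertex (a loop contributes 2). -/
def Multigraph.degree (G : Multigraph) (v : G.V) : ℕ :=
  ∑ e : G.E, (if v ∈ G.ends e then (if (G.ends e).IsDiag then 2 else 1) else 0)

/-- `av(G)`: the number of distinct vertex degrees in `G`. -/
def av (G : Multigraph) : ℕ := (Finset.univ.image G.degree).card

/-- `ev(G)`: the number of distinct even vertex degrees in `G`. -/
def ev (G : Multigraph) : ℕ :=
  ((Finset.univ.image G.degree).filter (fun d => Even d)).card

/-- `ov(G)`: the number of distinct odd vertex degrees in `G`. -/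
def ov (G : Multigraph) : ℕ :=
  ((Finset.univ.image G.degree).filter (fun d => Odd d)).card

/-- `z i t`: the net number of cohesive ends of type `i` on tile `t`
(unhatted count minus hatted count). -/
def zval {m : ℕ} (i : Fin m) (t : Tile m) : ℤ :=
  (t.count (Sum.inl i) : ℤ) - (t.count (Sum.inr i) : ℤ)

/-- The wheel graph on `n` vertices: the hub is `none`; the outer-cycle
vertices are `some i` for `i : Fin (n-1)`.  Edge `Sum.inl i` is the spoke from
the hub to `some i`; edge `Sum.inr i` is the outer-cycle edge from `some i` to
`some ((i+1) mod (n-1))`. -/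
def wheel (n : ℕ) : Multigraph where
  V := Option (Fin (n - 1))
  E := Fin (n - 1) ⊕ Fin (n - 1)
  ends e :=
    match e with
    | Sum.inl i => s((none : Option (Fin (n - 1))), some i)
    | Sum.inr i => s(some i,
        some ⟨(i.val + 1) % (n - 1), Nat.mod_lt _ (by have := i.isLt; omega)⟩)

/-- The cycle graph on `n` vertices (vertices `none, some 0, …, some (n-2)`,
edge `k` joining the `k`-th and `(k+1 mod n)`-th vertices in this order). -/
def cycleVtx (n : ℕ) (k : Fin n) : Option (Fin (n - 1)) :=
  if h : k.val = 0 then none else some ⟨k.val - 1, by have := k.isLt; omega⟩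

def cycleGraph (n : ℕ) : Multigraph where
  V := Option (Fin (n - 1))
  E := Fin n
  ends k := s(cycleVtx n k,
    cycleVtx n ⟨(k.val + 1) % n, Nat.mod_lt _ (by have := k.isLt; omega)⟩)

/-!
If two rim edges of the wheel carry the same bond-edge type and point the same way around the
rim, say `i → i+1` and `j → j+1`, exchange their heads: the edges become `i → j+1` and `j → i+1`.
Every vertex keeps its tile, so the new graph is realized by `P` with the same number of vertices
and must be isomorphic to `W_n`. But it splits the rim into the two cycles `i+1, …, j` and
`j+1, …, i`, so its hub is a cut vertex, while `W_n` has none. Among three rim edges of one type,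
two point the same way.
-/

open Set

/-- `S` is a union of components of `G` with the vertex `h` removed. -/
def Multigraph.Separates (G : Multigraph) (h : G.V) (S : Set G.V) : Prop :=
  ∀ e, h ∉ G.ends e → ∀ u ∈ G.ends e, ∀ w ∈ G.ends e, u ∈ S → w ∈ S

def Multigraph.IsCutVertex (G : Multigraph) (h : G.V) : Prop :=
  ∃ S, G.Separates h S ∧ (∃ x ∈ S, x ≠ h) ∧ ∃ y ∉ S, y ≠ h

theorem Sym2.mem_imp_of_iff {α : Type*} {a b u w : α} {S : Set α} (hab : a ∈ S ↔ b ∈ S)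
    (hu : u ∈ s(a, b)) (hw : w ∈ s(a, b)) (huS : u ∈ S) : w ∈ S := by
  rcases Sym2.mem_iff.1 hu with rfl | rfl <;> rcases Sym2.mem_iff.1 hw with rfl | rfl <;> tauto

theorem Multigraph.Separates.iff {G : Multigraph} {h : G.V} {S : Set G.V} (hS : G.Separates h S)
    {e : G.E} {u w : G.V} (he : G.ends e = s(u, w)) (hh : h ∉ G.ends e) : u ∈ S ↔ w ∈ S :=
  ⟨hS e hh u (he ▸ Sym2.mem_mk_left u w) w (he ▸ Sym2.mem_mk_right u w),
    hS e hh w (he ▸ Sym2.mem_mk_right u w) u (he ▸ Sym2.mem_mk_left u w)⟩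

theorem MultigraphIso.isCutVertex {G H : Multigraph} (φ : MultigraphIso G H) {h : G.V}
    (hh : G.IsCutVertex h) : H.IsCutVertex (φ.vEquiv h) := by
  obtain ⟨S, hS, ⟨x, hxS, hxh⟩, y, hyS, hyh⟩ := hh
  refine ⟨φ.vEquiv.symm ⁻¹' S, ?_, ⟨φ.vEquiv x, by simpa, by simpa⟩,
    φ.vEquiv y, by simpa, by simpa⟩
  intro e' hh' u' hu' w' hw' huS
  obtain ⟨e, rfl⟩ := φ.eEquiv.surjective e'
  rw [φ.ends_eq] at hh' hu' hw'
  obtain ⟨u, hu, rfl⟩ := Sym2.mem_map.1 hu'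
  obtain ⟨w, hw, rfl⟩ := Sym2.mem_map.1 hw'
  simp only [mem_preimage, Equiv.symm_apply_apply] at huS ⊢
  exact hS e (fun hhe => hh' (Sym2.mem_map.2 ⟨h, hhe, rfl⟩)) u hu w hw huS

theorem isomorphic_of_cmin_eq {m : ℕ} {P : Pot m} {G H : Multigraph}
    (hP : Cmin P = {H | Isomorphic H G}) (hH : Realizes P H) (hord : H.order = G.order) :
    Isomorphic H G := by
  have hG : G ∈ Cmin P := hP ▸ ⟨⟨Equiv.refl _, Equiv.refl _, fun e => by simp⟩⟩
  have hHmin : H ∈ Cmin P := ⟨hH, hord.trans hG.2⟩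
  rwa [hP] at hHmin

namespace Assembly

variable {m : ℕ} {G : Multigraph}

def rewire (A : Assembly m G) (σ : Equiv.Perm G.E) : Multigraph where
  V := G.V
  E := G.E
  ends e := s((A.orient e).1, (A.orient (σ e)).2)

def rewired (A : Assembly m G) (σ : Equiv.Perm G.E) : Assembly m (A.rewire σ) where
  orient e := ((A.orient e).1, (A.orient (σ e)).2)
  label := A.label
  orient_ends _ := rfl

theorem tileOf_rewired (A : Assembly m G) {σ : Equiv.Perm G.E}
    (hσ : ∀ e, A.label (σ e) = A.label e) (v : G.V) : (A.rewired σ).tileOf v = A.tileOf v := by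
  let tails : G.E → Tile m := fun e => if (A.orient e).1 = v then {Sum.inl (A.label e)} else 0
  let heads : G.E → Tile m := fun e => if (A.orient e).2 = v then {Sum.inr (A.label e)} else 0
  have h1 : A.tileOf v = ∑ e, (tails e + heads e) := rfl
  have h2 : (A.rewired σ).tileOf v = ∑ e, (tails e + heads (σ e)) :=
    Finset.sum_congr rfl fun (e : G.E) _ => by simp only [heads, hσ]; rfl
  rw [h1, h2, Finset.sum_add_distrib, Finset.sum_add_distrib, Equiv.sum_comp σ heads]

theorem realizes_rewire_swap [DecidableEq G.E] {P : Pot m} (A : Assembly m G)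
    (hA : ∀ v, A.tileOf v ∈ P) {e₁ e₂ : G.E} (hlabel : A.label e₁ = A.label e₂) :
    Realizes P (A.rewire (Equiv.swap e₁ e₂)) := by
  refine ⟨A.rewired _, fun v => ?_⟩
  rw [tileOf_rewired A (fun e => ?_) v]
  · exact hA v
  · rcases eq_or_ne e e₁ with rfl | he₁
    · rw [Equiv.swap_apply_left, hlabel]
    rcases eq_or_ne e e₂ with rfl | he₂
    · rw [Equiv.swap_apply_right, hlabel]
    rw [Equiv.swap_apply_of_ne_of_ne he₁ he₂]

theorem isCutVertex_rewire_swap [DecidableEq G.E] (A : Assembly m G) {h : G.V} {S : Set G.V}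
    {e₁ e₂ : G.E}
    (hS : ∀ e, e ≠ e₁ → e ≠ e₂ → h ∉ G.ends e →
      ∀ u ∈ G.ends e, ∀ w ∈ G.ends e, u ∈ S → w ∈ S)
    (he₁ : (A.orient e₁).1 ∈ S ↔ (A.orient e₂).2 ∈ S)
    (he₂ : (A.orient e₂).1 ∈ S ↔ (A.orient e₁).2 ∈ S)
    (hx : ∃ x ∈ S, x ≠ h) (hy : ∃ y ∉ S, y ≠ h) :
    (A.rewire (Equiv.swap e₁ e₂)).IsCutVertex h := by
  refine ⟨S, fun (e : G.E) hh u hu w hw huS => ?_, hx, hy⟩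
  have hends : (A.rewire (Equiv.swap e₁ e₂)).ends e =
      s((A.orient e).1, (A.orient (Equiv.swap e₁ e₂ e)).2) := rfl
  rw [hends] at hh hu hw
  by_cases hne₁ : e = e₁
  · rw [hne₁, Equiv.swap_apply_left] at hu hw
    exact Sym2.mem_imp_of_iff he₁ hu hw huS
  by_cases hne₂ : e = e₂
  · rw [hne₂, Equiv.swap_apply_right] at hu hw
    exact Sym2.mem_imp_of_iff he₂ hu hw huS
  rw [Equiv.swap_apply_of_ne_of_ne hne₁ hne₂, ← A.orient_ends] at hh hu hw
  exact hS e hne₁ hne₂ hh u hu w hw huS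

end Assembly

def rimSucc {N : ℕ} (k : Fin N) : Fin N := ⟨(k.val + 1) % N, Nat.mod_lt _ k.pos⟩

theorem rimSucc_val {N : ℕ} (k : Fin N) :
    (rimSucc k).val = k.val + 1 ∧ k.val + 1 < N ∨ (rimSucc k).val = 0 ∧ k.val + 1 = N := by
  rcases (Nat.succ_le_of_lt k.isLt).lt_or_eq with hk | hk
  · exact Or.inl ⟨Nat.mod_eq_of_lt hk, hk⟩
  · refine Or.inr ⟨?_, hk⟩
    change (k.val + 1) % N = 0
    rw [show k.val + 1 = N from hk, Nat.mod_self]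

theorem iff_of_forall_iff_rimSucc {N : ℕ} {p : Fin N → Prop} (hp : ∀ k, p k ↔ p (rimSucc k))
    (k l : Fin N) : p k ↔ p l := by
  have hzero : ∀ k : Fin N, p k ↔ p ⟨0, k.pos⟩ := by
    rintro ⟨t, ht⟩
    induction t with
    | zero => rfl
    | succ t ih =>
      have hsucc : rimSucc ⟨t, by omega⟩ = ⟨t + 1, ht⟩ := Fin.ext (Nat.mod_eq_of_lt ht)
      rw [← hsucc, ← hp, ih]
  rw [hzero k, hzero l]

section Ioc

variable {N : ℕ} {i j k : Fin N}

theorem rimSucc_mem_Ioc_iff (hi : k ≠ i) (hj : k ≠ j) :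
    rimSucc k ∈ Ioc i j ↔ k ∈ Ioc i j := by
  simp only [mem_Ioc, Fin.lt_def, Fin.le_def, ne_eq, Fin.ext_iff] at hi hj ⊢
  have := j.isLt
  rcases rimSucc_val k with ⟨h, _⟩ | ⟨h, _⟩ <;> omega

theorem rimSucc_mem_Ioc (hij : i < j) : rimSucc i ∈ Ioc i j := by
  simp only [mem_Ioc, Fin.lt_def, Fin.le_def] at hij ⊢
  rcases rimSucc_val i with ⟨h, _⟩ | ⟨h, _⟩ <;> omega

theorem rimSucc_notMem_Ioc : rimSucc j ∉ Ioc i j := by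
  simp only [mem_Ioc, Fin.lt_def, Fin.le_def, not_and, not_le]
  rcases rimSucc_val j with ⟨h, _⟩ | ⟨h, _⟩ <;> omega

end Ioc

section Wheel

variable {n : ℕ}

instance : DecidableEq (wheel n).E := inferInstanceAs (DecidableEq (Fin (n - 1) ⊕ Fin (n - 1)))

theorem wheel_ends_inl (k : Fin (n - 1)) : (wheel n).ends (Sum.inl k) = s(none, some k) := rfl

theorem wheel_ends_inr (k : Fin (n - 1)) :
    (wheel n).ends (Sum.inr k) = s(some k, some (rimSucc k)) := rfl

theorem wheel_hub_notMem_ends_inr (k : Fin (n - 1)) : none ∉ (wheel n).ends (Sum.inr k) :=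
  fun h => by rcases Sym2.mem_iff.1 h with h | h <;> cases h

theorem wheel_some_notMem_ends_inl {c k : Fin (n - 1)} (hk : k ≠ c) :
    some c ∉ (wheel n).ends (Sum.inl k) := fun h => by
  rcases Sym2.mem_iff.1 h with h | h
  · cases h
  · exact hk (Option.some_injective _ h).symm

def rimArc (i j : Fin (n - 1)) : Set (wheel n).V := some '' Ioc i j

theorem some_mem_rimArc {i j k : Fin (n - 1)} : some k ∈ rimArc i j ↔ k ∈ Ioc i j :=
  Option.some_injective _ |>.mem_set_image

theorem wheel_not_isCutVertex (v : (wheel n).V) : ¬ (wheel n).IsCutVertex v := by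
  rintro ⟨S, hS, ⟨x, hxS, hxv⟩, y, hyS, hyv⟩
  cases v with
  | none =>
    have hrim : ∀ k, some k ∈ S ↔ some (rimSucc k) ∈ S := fun k =>
      hS.iff (wheel_ends_inr k) (wheel_hub_notMem_ends_inr k)
    obtain ⟨x, rfl⟩ := Option.ne_none_iff_exists'.1 hxv
    obtain ⟨y, rfl⟩ := Option.ne_none_iff_exists'.1 hyv
    exact hyS ((iff_of_forall_iff_rimSucc (p := fun k => some k ∈ S) hrim x y).1 hxS)
  | some c =>
    have hspoke : ∀ w, w ≠ some c → (none ∈ S ↔ w ∈ S) := by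
      rintro (_ | k) hk
      · rfl
      · exact hS.iff (wheel_ends_inl k) (wheel_some_notMem_ends_inl fun h => hk (congrArg _ h))
    exact hyS ((hspoke y hyv).1 ((hspoke x hxv).2 hxS))

theorem Assembly.orient_wheel_rim {m : ℕ} (A : Assembly m (wheel n)) (k : Fin (n - 1)) :
    A.orient (Sum.inr k) = (some k, some (rimSucc k)) ∨
      A.orient (Sum.inr k) = (some (rimSucc k), some k) := by
  have h := A.orient_ends (Sum.inr k)
  rw [wheel_ends_inr] at h
  rcases Sym2.eq_iff.1 h with ⟨h₁, h₂⟩ | ⟨h₁, h₂⟩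
  · exact Or.inl (Prod.ext h₁.symm h₂.symm)
  · exact Or.inr (Prod.ext h₂.symm h₁.symm)

theorem rimArc_separates_of_ne {i j : Fin (n - 1)} (e : (wheel n).E) (hi : e ≠ Sum.inr i)
    (hj : e ≠ Sum.inr j) (hh : none ∉ (wheel n).ends e) :
    ∀ u ∈ (wheel n).ends e, ∀ w ∈ (wheel n).ends e,
      u ∈ rimArc i j → w ∈ rimArc i j := by
  intro u hu w hw
  cases e with
  | inl k => exact absurd (Sym2.mem_mk_left _ _) hh
  | inr k =>
    rw [wheel_ends_inr] at hu hw
    refine Sym2.mem_imp_of_iff ?_ hu hw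
    exact some_mem_rimArc.trans <|
      (rimSucc_mem_Ioc_iff (fun h => hi (congrArg _ h)) (fun h => hj (congrArg _ h))).symm.trans
        some_mem_rimArc.symm

theorem Assembly.isCutVertex_rewire_wheel {m : ℕ} (A : Assembly m (wheel n)) {i j : Fin (n - 1)}
    (hij : i < j)
    (hdir : A.orient (Sum.inr i) = (some i, some (rimSucc i)) ↔
      A.orient (Sum.inr j) = (some j, some (rimSucc j))) :
    (A.rewire (Equiv.swap (Sum.inr i) (Sum.inr j))).IsCutVertex none := by
  have hi : some i ∉ rimArc i j := some_mem_rimArc.not.2 fun h => (lt_irrefl i) h.1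
  have hj : some j ∈ rimArc i j := some_mem_rimArc.2 ⟨hij, le_rfl⟩
  have hi' : some (rimSucc i) ∈ rimArc i j := some_mem_rimArc.2 (rimSucc_mem_Ioc hij)
  have hj' : some (rimSucc j) ∉ rimArc i j := some_mem_rimArc.not.2 rimSucc_notMem_Ioc
  have hx : ∃ x ∈ rimArc i j, x ≠ none := ⟨_, hj, nofun⟩
  have hy : ∃ y ∉ rimArc i j, y ≠ none := ⟨_, hi, nofun⟩
  by_cases hfwd : A.orient (Sum.inr i) = (some i, some (rimSucc i))
  · refine A.isCutVertex_rewire_swap rimArc_separates_of_ne ?_ ?_ hx hy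
    · rw [hfwd, hdir.1 hfwd]
      exact iff_of_false hi hj'
    · rw [hfwd, hdir.1 hfwd]
      exact iff_of_true hj hi'
  · have hbwd_i := (A.orient_wheel_rim i).resolve_left hfwd
    have hbwd_j := (A.orient_wheel_rim j).resolve_left (hdir.not.1 hfwd)
    refine A.isCutVertex_rewire_swap rimArc_separates_of_ne ?_ ?_ hx hy
    · rw [hbwd_i, hbwd_j]
      exact iff_of_true hi' hj
    · rw [hbwd_i, hbwd_j]
      exact iff_of_false hj' hi

end Wheel

theorem wheel_cycle_lemma_general (n : ℕ) {m : ℕ} (P : Pot m)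
    (hP : Cmin P = {H | Isomorphic H (wheel n)})
    (A : Assembly m (wheel n)) (hA : ∀ v, A.tileOf v ∈ P) (a : Fin m) :
    (Finset.univ.filter
      (fun i : Fin (n - 1) => A.label (Sum.inr i) = a)).card ≤ 2 := by
  have hsameDir : ∀ i j : Fin (n - 1), i < j → A.label (Sum.inr i) = a →
      A.label (Sum.inr j) = a →
      (A.orient (Sum.inr i) = (some i, some (rimSucc i)) ↔
        A.orient (Sum.inr j) = (some j, some (rimSucc j))) → False := by
    intro i j hij hi hj hdir
    obtain ⟨φ⟩ := isomorphic_of_cmin_eq hP (A.realizes_rewire_swap hA (hi.trans hj.symm)) rfl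
    exact wheel_not_isCutVertex _ (φ.isCutVertex (A.isCutVertex_rewire_wheel hij hdir))
  classical
  by_contra! hcard
  obtain ⟨i, hi, j, hj, hne, hdir⟩ := Finset.exists_ne_map_eq_of_card_lt_of_maps_to
    (t := Finset.univ) (f := fun k => decide (A.orient (Sum.inr k) = (some k, some (rimSucc k))))
    (by simpa using hcard) (fun _ _ => Finset.mem_coe.2 (Finset.mem_univ _))
  simp only [Finset.mem_filter, Finset.mem_univ, true_and, decide_eq_decide] at hi hj hdir
  rcases hne.lt_or_gt with hij | hji
  · exact hsameDir i j hij hi hj hdir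
  · exact hsameDir j i hji hj hi hdir.symm

/-- If `C_min(P) = {W_n}` (up to isomorphism) with `n ≥ 5`, then in any assembly
of `W_n` from `P`, each bond-edge type appears on at most two of the `n-1`
outer-cycle edges. -/
theorem wheel_cycle_lemma (n : ℕ) (hn : 5 ≤ n) {m : ℕ} (P : Pot m)
    (hP : Cmin P = {H | Isomorphic H (wheel n)})
    (A : Assembly m (wheel n)) (hA : ∀ v, A.tileOf v ∈ P) (a : Fin m) :
    (Finset.univ.filter
      (fun i : Fin (n - 1) => A.label (Sum.inr i) = a)).card ≤ 2 :=
  wheel_cycle_lemma_general n P hP A hA a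
end

section
/- For any finite graph G, av(G) ≤ T_1(G) ≤ ev(G) + 2·ov(G), where av(G) is the number of distinct vertex degrees occurring in G, ev(G) is the number of distinct even vertex degrees occurring in G, and ov(G) is the number of distinct odd vertex degrees occurring in G. -/
/-!
Lower bound: the tile of a vertex has exactly `deg v` cohesive ends, so vertices of different
degrees need different tiles.

Upper bound: every multigraph has an orientation in which out- and in-degree differ by at most
one at every vertex. By induction on the number of non-loop edges: two non-loop edges `v₀a`,
`v₀b` are replaced by an edge `ab` and a loop at `v₀`, and an orientation `a → b` becomes the
path `a → v₀ → b`, which changes no excess; once the non-loop edges are pairwise disjoint, any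
orientation is balanced. With a single bond-edge type, a tile is determined by its size (the
degree) and its excess `out − in`, which is `0` at even degree and `±1` at odd degree.
-/

open Function
open scoped Finset

section BalancedOrientation

variable {V E : Type*} [DecidableEq V]

def edgeExcess (p : V × V) (v : V) : ℤ :=
  (if p.1 = v then 1 else 0) - (if p.2 = v then 1 else 0)

lemma edgeExcess_eq_zero_of_isDiag {p : V × V} (h : s(p.1, p.2).IsDiag) (v : V) :
    edgeExcess p v = 0 := by
  simp [edgeExcess, Sym2.mk_isDiag_iff.mp h]

lemma mem_of_edgeExcess_ne_zero {p : V × V} {v : V} (h : edgeExcess p v ≠ 0) :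
    v ∈ s(p.1, p.2) := by
  rw [Sym2.mem_iff]
  unfold edgeExcess at h
  split_ifs at h <;> simp_all [eq_comm]

lemma abs_edgeExcess_le_one (p : V × V) (v : V) : |edgeExcess p v| ≤ 1 := by
  unfold edgeExcess
  split_ifs <;> simp

lemma exists_edgeExcess_add_eq {a b v₀ : V} {p : V × V} (hp : s(a, b) = s(p.1, p.2)) :
    ∃ o₁ o₂ : V × V, s(v₀, a) = s(o₁.1, o₁.2) ∧ s(v₀, b) = s(o₂.1, o₂.2) ∧
      ∀ v, edgeExcess o₁ v + edgeExcess o₂ v = edgeExcess p v := by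
  obtain ⟨x, y⟩ := p
  rcases Sym2.eq_iff.mp hp with ⟨rfl, rfl⟩ | ⟨rfl, rfl⟩
  · exact ⟨(a, v₀), (v₀, b), Sym2.eq_swap, rfl, fun v => by simp only [edgeExcess]; ring⟩
  · exact ⟨(v₀, a), (b, v₀), rfl, Sym2.eq_swap, fun v => by simp only [edgeExcess]; ring⟩

variable [Fintype E]

def IsOrientationOf (f : E → V × V) (ends : E → Sym2 V) : Prop :=
  ∀ e, ends e = s((f e).1, (f e).2)

def excess (f : E → V × V) (v : V) : ℤ :=
  ∑ e, edgeExcess (f e) v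

lemma exists_balanced_orientation_of_nonloops_disjoint {ends : E → Sym2 V}
    (h : ∀ e₁ e₂ v, ¬(ends e₁).IsDiag → ¬(ends e₂).IsDiag → v ∈ ends e₁ → v ∈ ends e₂ →
      e₁ = e₂) :
    ∃ f, IsOrientationOf f ends ∧ ∀ v, |excess f v| ≤ 1 := by
  have hout : IsOrientationOf (fun e => (ends e).out) ends := fun e => by
    rw [Sym2.mk, Quot.out_eq]
  refine ⟨_, hout, fun v => ?_⟩
  have hunique : ∀ e₁ e₂, edgeExcess (ends e₁).out v ≠ 0 → edgeExcess (ends e₂).out v ≠ 0 →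
      e₁ = e₂ := by
    intro e₁ e₂ h₁ h₂
    refine h e₁ e₂ v ?_ ?_ (hout e₁ ▸ mem_of_edgeExcess_ne_zero h₁)
      (hout e₂ ▸ mem_of_edgeExcess_ne_zero h₂)
    · exact fun hd => h₁ (edgeExcess_eq_zero_of_isDiag (hout e₁ ▸ hd) v)
    · exact fun hd => h₂ (edgeExcess_eq_zero_of_isDiag (hout e₂ ▸ hd) v)
  by_cases hex : ∃ e₀, edgeExcess (ends e₀).out v ≠ 0
  · obtain ⟨e₀, he₀⟩ := hex
    rw [excess, Fintype.sum_eq_single e₀ fun e he => not_not.mp fun h' => he (hunique e e₀ h' he₀)]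
    exact abs_edgeExcess_le_one _ _
  · push Not at hex
    simp [excess, hex]

lemma exists_orientation_excess_eq_of_merge [DecidableEq E] {ends : E → Sym2 V} {e₁ e₂ : E}
    {v₀ a b : V} (hne : e₁ ≠ e₂) (h₁ : ends e₁ = s(v₀, a)) (h₂ : ends e₂ = s(v₀, b))
    {f' : E → V × V} (hf' : IsOrientationOf f' (update (update ends e₁ s(a, b)) e₂ s(v₀, v₀))) :
    ∃ f, IsOrientationOf f ends ∧ excess f = excess f' := by
  have hf'₁ : s(a, b) = s((f' e₁).1, (f' e₁).2) := by simpa [hne] using hf' e₁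
  have hf'₂ : s((f' e₂).1, (f' e₂).2).IsDiag := by simp [← hf' e₂]
  obtain ⟨o₁, o₂, ho₁, ho₂, hsum⟩ := exists_edgeExcess_add_eq (v₀ := v₀) hf'₁
  refine ⟨update (update f' e₁ o₁) e₂ o₂, fun e => ?_, funext fun v => ?_⟩
  · rcases eq_or_ne e e₂ with rfl | he₂
    · rw [update_self, h₂, ho₂]
    rcases eq_or_ne e e₁ with rfl | he₁
    · rw [update_of_ne he₂, update_self, h₁, ho₁]
    · simpa [he₁, he₂] using hf' e
  · rw [← sub_eq_zero, excess, excess, ← Finset.sum_sub_distrib,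
      Fintype.sum_eq_add e₁ e₂ hne fun e he => by simp [he.1, he.2]]
    simp [hne, edgeExcess_eq_zero_of_isDiag hf'₂, ← hsum]

lemma card_nonloops_update_lt [DecidableEq E] {ends : E → Sym2 V} {e₁ e₂ : E} (hne : e₁ ≠ e₂)
    (h₁ : ¬(ends e₁).IsDiag) (h₂ : ¬(ends e₂).IsDiag) (z : Sym2 V) (v₀ : V) :
    #{e | ¬(update (update ends e₁ z) e₂ s(v₀, v₀) e).IsDiag} < #{e | ¬(ends e).IsDiag} := by
  refine Finset.card_lt_card (Finset.ssubset_iff_of_subset ?_ |>.mpr ⟨e₂, by simp [h₂], by simp⟩)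
  intro e
  rcases eq_or_ne e e₂ with rfl | he₂
  · simp
  rcases eq_or_ne e e₁ with rfl | he₁
  · simp [he₂, h₁]
  · simp [he₁, he₂]

theorem exists_balanced_orientation (ends : E → Sym2 V) :
    ∃ f, IsOrientationOf f ends ∧ ∀ v, |excess f v| ≤ 1 := by
  classical
  induction hn : #{e | ¬(ends e).IsDiag} using Nat.strong_induction_on generalizing ends with
  | _ n ih =>
  by_cases hshare : ∃ e₁ e₂ v₀, e₁ ≠ e₂ ∧ ¬(ends e₁).IsDiag ∧ ¬(ends e₂).IsDiag ∧
      v₀ ∈ ends e₁ ∧ v₀ ∈ ends e₂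
  · obtain ⟨e₁, e₂, v₀, hne, hl₁, hl₂, hv₁, hv₂⟩ := hshare
    obtain ⟨a, ha⟩ := Sym2.mem_iff_exists.mp hv₁
    obtain ⟨b, hb⟩ := Sym2.mem_iff_exists.mp hv₂
    obtain ⟨f', hf', hbal⟩ :=
      ih _ (hn ▸ card_nonloops_update_lt hne hl₁ hl₂ s(a, b) v₀) _ rfl
    obtain ⟨f, hf, hexcess⟩ := exists_orientation_excess_eq_of_merge hne ha hb hf'
    exact ⟨f, hf, hexcess ▸ hbal⟩
  · push Not at hshare
    exact exists_balanced_orientation_of_nonloops_disjoint fun e₁ e₂ v hl₁ hl₂ hv₁ hv₂ =>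
      not_not.mp fun hne => hshare e₁ e₂ v hne hl₁ hl₂ hv₁ hv₂

end BalancedOrientation

lemma ite_mem_mk_isDiag_eq {V : Type*} [DecidableEq V] (p : V × V) (v : V) :
    (if v ∈ s(p.1, p.2) then (if s(p.1, p.2).IsDiag then 2 else 1) else 0) =
      (if p.1 = v then 1 else 0) + (if p.2 = v then 1 else 0) := by
  obtain ⟨x, y⟩ := p
  simp only [Sym2.mem_iff, Sym2.mk_isDiag_iff]
  split_ifs <;> grind

namespace Assembly

variable {m : ℕ} {G : Multigraph}

lemma card_tileOf (A : Assembly m G) (v : G.V) :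
    Multiset.card (A.tileOf v) = G.degree v := by
  rw [tileOf, Multiset.card_bind, Multigraph.degree, Finset.sum_map_val]
  refine Finset.sum_congr rfl fun e _ => ?_
  rw [comp_apply, A.orient_ends e, ite_mem_mk_isDiag_eq, Multiset.card_add]
  simp only [apply_ite Multiset.card, Multiset.card_singleton, Multiset.card_zero]

lemma zval_tileOf (A : Assembly m G) (i : Fin m) (v : G.V) :
    zval i (A.tileOf v) = ∑ e, if A.label e = i then edgeExcess (A.orient e) v else 0 := by
  rw [zval, tileOf, Multiset.count_bind, Multiset.count_bind, Finset.sum_map_val,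
    Finset.sum_map_val]
  push_cast
  rw [← Finset.sum_sub_distrib]
  refine Finset.sum_congr rfl fun e _ => ?_
  simp only [edgeExcess, Multiset.count_add, apply_ite (Multiset.count _),
    Multiset.count_singleton, Multiset.count_zero]
  split_ifs <;> simp_all [eq_comm (a := i)]

end Assembly

namespace Tile

lemma card_eq_zval_add (t : Tile 1) :
    (Multiset.card t : ℤ) = zval 0 t + 2 * t.count (Sum.inr 0) := by
  rw [← Multiset.sum_count_eq_card (s := Finset.univ) fun a _ => Finset.mem_univ a,
    Fintype.sum_sum_type, Fin.sum_univ_one, Fin.sum_univ_one, zval]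
  push_cast
  ring

lemma eq_of_card_eq_of_zval_eq {t t' : Tile 1} (hc : Multiset.card t = Multiset.card t')
    (hz : zval 0 t = zval 0 t') : t = t' := by
  have h := card_eq_zval_add t
  have h' := card_eq_zval_add t'
  unfold zval at h h' hz
  ext (i | i) <;> obtain rfl := Subsingleton.elim i 0 <;> omega

end Tile

lemma card_pot_le_of_abs_zval_le_one (P : Pot 1) (D : Finset ℕ)
    (hD : ∀ t ∈ P, Multiset.card t ∈ D) (hz : ∀ t ∈ P, |zval 0 t| ≤ 1) :
    P.card ≤ #{d ∈ D | Even d} + 2 * #{d ∈ D | Odd d} := by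
  have hinj : Injective fun t : Tile 1 => (Multiset.card t, zval 0 t) :=
    fun t t' h => Tile.eq_of_card_eq_of_zval_eq (Prod.ext_iff.mp h).1 (Prod.ext_iff.mp h).2
  have hsub : P.image (fun t => (Multiset.card t, zval 0 t)) ⊆
      {d ∈ D | Even d} ×ˢ {0} ∪ {d ∈ D | Odd d} ×ˢ {1, -1} := by
    simp only [Finset.subset_iff, Finset.mem_image]
    rintro _ ⟨t, ht, rfl⟩
    have hcard := Tile.card_eq_zval_add t
    have hbound := abs_le.mp (hz t ht)
    rcases Nat.even_or_odd (Multiset.card t) with ⟨k, hk⟩ | ⟨k, hk⟩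
    · refine Finset.mem_union_left _ (Finset.mem_product.mpr ⟨?_, ?_⟩)
      · exact Finset.mem_filter.mpr ⟨hD t ht, k, hk⟩
      · simp only [Finset.mem_singleton]; omega
    · refine Finset.mem_union_right _ (Finset.mem_product.mpr ⟨?_, ?_⟩)
      · exact Finset.mem_filter.mpr ⟨hD t ht, k, hk⟩
      · simp only [Finset.mem_insert, Finset.mem_singleton]; omega
  calc P.card = #(P.image fun t => (Multiset.card t, zval 0 t)) :=
        (Finset.card_image_of_injective _ hinj).symm
    _ ≤ #({d ∈ D | Even d} ×ˢ {0} ∪ {d ∈ D | Odd d} ×ˢ ({1, -1} : Finset ℤ)) :=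
        Finset.card_le_card hsub
    _ ≤ #{d ∈ D | Even d} + 2 * #{d ∈ D | Odd d} := by
        refine (Finset.card_union_le _ _).trans ?_
        simp [Finset.card_product, mul_comm]

lemma av_le_card_of_realizes {m : ℕ} {P : Pot m} {G : Multigraph} (h : Realizes P G) :
    av G ≤ P.card := by
  obtain ⟨A, hA⟩ := h
  calc av G = #((Finset.univ.image A.tileOf).image Multiset.card) := by
        simp only [av, Finset.image_image, comp_def, A.card_tileOf]
    _ ≤ #(Finset.univ.image A.tileOf) := Finset.card_image_le
    _ ≤ P.card := Finset.card_le_card (Finset.image_subset_iff.mpr fun v _ => hA v)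

lemma exists_pot_realizes_card_le (G : Multigraph) :
    ∃ P : Pot 1, Realizes P G ∧ P.card ≤ ev G + 2 * ov G := by
  obtain ⟨f, hf, hbal⟩ := exists_balanced_orientation G.ends
  let A : Assembly 1 G := ⟨f, fun _ => 0, hf⟩
  refine ⟨Finset.univ.image A.tileOf, ⟨A, fun v => Finset.mem_image_of_mem _ (Finset.mem_univ v)⟩,
    card_pot_le_of_abs_zval_le_one _ _ ?_ ?_⟩
  · simp only [Finset.mem_image, Finset.mem_univ, true_and]
    rintro _ ⟨v, rfl⟩
    exact ⟨v, (A.card_tileOf v).symm⟩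
  · simp only [Finset.mem_image, Finset.mem_univ, true_and]
    rintro _ ⟨v, rfl⟩
    simpa [A.zval_tileOf, A, excess] using hbal v

/-- `av(G) ≤ T₁(G) ≤ ev(G) + 2·ov(G)` for every finite graph `G`. -/
theorem T1_bounds (G : Multigraph) :
    av G ≤ T1 G ∧ T1 G ≤ ev G + 2 * ov G := by
  obtain ⟨P, hP, hcard⟩ := exists_pot_realizes_card_le G
  have hP' : P.card ∈ {c | ∃ m, ∃ P : Pot m, Realizes P G ∧ P.card = c} := ⟨1, P, hP, rfl⟩
  refine ⟨le_csInf ⟨_, hP'⟩ ?_, (Nat.sInf_le hP').trans hcard⟩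
  rintro _ ⟨m, Q, hQ, rfl⟩
  exact av_le_card_of_realizes hQ
end

section
/- Let n ≥ 5 and let P = {t_1, t_2} be the pot over the single bond-edge type a with t_1 = {a, â, â} and t_2 = {a^{n-1}}. Then the construction matrix M(P) has the unique solution ((n−1)/n, 1/n); consequently m_P = n, i.e., the smallest multigraph realized by P has n vertices. -/
/-!
Every edge contributes `+1` and `-1` to the net count of its bond-edge type, so for any
assembly the proportions of vertices carrying each tile solve the construction matrix. For
this pot the solution is unique with `r₂ = 1/n`, so a realized graph has `n` times as many
vertices as hub tiles, hence at least `n`. The wheel on `n` vertices, spokes oriented out of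
the hub and rim oriented cyclically, attains `n`.
-/

open Finset

def IsConstructionSolution {m : ℕ} {ι : Type*} [Fintype ι] (t : ι → Tile m) (r : ι → ℚ) :
    Prop :=
  (∀ i : Fin m, ∑ j, r j * (zval i (t j) : ℚ) = 0) ∧ ∑ j, r j = 1

lemma isConstructionSolution_iff_of_zval_eq {t : Fin 2 → Tile 1} {a b : ℚ} (hab : a + b ≠ 0)
    (h0 : (zval 0 (t 0) : ℚ) = -a) (h1 : (zval 0 (t 1) : ℚ) = b) (r : Fin 2 → ℚ) :
    IsConstructionSolution t r ↔ r 0 = b / (a + b) ∧ r 1 = a / (a + b) := by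
  simp only [IsConstructionSolution, Fin.forall_fin_one, Fin.sum_univ_two, h0, h1]
  constructor
  · rintro ⟨h, hsum⟩
    rw [eq_div_iff hab, eq_div_iff hab]
    exact ⟨by linear_combination -h + b * hsum, by linear_combination h + a * hsum⟩
  · rintro ⟨hr0, hr1⟩
    rw [hr0, hr1]
    constructor <;> field_simp <;> ring

namespace Assembly

variable {m : ℕ} {G : Multigraph} (A : Assembly m G)

lemma count_inl_tileOf (i : Fin m) (v : G.V) :
    (A.tileOf v).count (Sum.inl i) = #{e | A.label e = i ∧ (A.orient e).1 = v} := by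
  simp only [tileOf, Multiset.count_bind, Multiset.count_add, card_filter]
  refine congrArg Multiset.sum (Multiset.map_congr rfl fun e _ => ?_)
  split_ifs <;> simp_all [Ne.symm]

lemma count_inr_tileOf (i : Fin m) (v : G.V) :
    (A.tileOf v).count (Sum.inr i) = #{e | A.label e = i ∧ (A.orient e).2 = v} := by
  simp only [tileOf, Multiset.count_bind, Multiset.count_add, card_filter]
  refine congrArg Multiset.sum (Multiset.map_congr rfl fun e _ => ?_)
  split_ifs <;> simp_all [Ne.symm]

lemma sum_zval_tileOf (i : Fin m) : ∑ v, zval i (A.tileOf v) = 0 := by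
  have hfiber (f : G.E → G.V) :
      ∑ v, #{e | A.label e = i ∧ f e = v} = #{e | A.label e = i} := by
    rw [card_eq_sum_card_fiberwise (f := f) (t := univ) fun _ _ => mem_coe.2 (mem_univ _)]
    simp only [filter_filter]
  simp only [zval, count_inl_tileOf, count_inr_tileOf, sum_sub_distrib]
  rw [← Nat.cast_sum, ← Nat.cast_sum, hfiber, hfiber, sub_self]

lemma tileOf_eq_replicate (A : Assembly 1 G) (v : G.V) :
    A.tileOf v = Multiset.replicate #{e | (A.orient e).1 = v} (Sum.inl 0) +
      Multiset.replicate #{e | (A.orient e).2 = v} (Sum.inr 0) := by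
  ext (i | i) <;> obtain rfl := Subsingleton.elim i 0 <;>
    simp [count_inl_tileOf, count_inr_tileOf, Multiset.count_replicate, Fin.fin_one_eq_zero]

lemma isConstructionSolution_of_tileOf_eq {ι : Type*} [Fintype ι] [DecidableEq ι]
    (t : ι → Tile m) (σ : G.V → ι) (hσ : ∀ v, A.tileOf v = t (σ v)) :
    IsConstructionSolution t fun j => (#{v | σ v = j} : ℚ) / G.order := by
  have hN : (G.order : ℚ) ≠ 0 := Nat.cast_ne_zero.2 Fintype.card_ne_zero
  refine ⟨fun i => ?_, ?_⟩
  · have hcount : ∑ j, (#{v | σ v = j} : ℚ) * zval i (t j) = 0 := by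
      have hzero := A.sum_zval_tileOf i
      simp only [hσ] at hzero
      rw [← sum_fiberwise' univ σ fun j => zval i (t j)] at hzero
      simp only [sum_const, nsmul_eq_mul] at hzero
      exact_mod_cast hzero
    simp only [div_mul_eq_mul_div, ← sum_div, hcount, zero_div]
  · rw [← sum_div, div_eq_one_iff_eq hN, ← Nat.cast_sum,
      ← card_eq_sum_card_fiberwise fun _ _ => mem_coe.2 (mem_univ _)]
    rfl

lemma le_order_of_isConstructionSolution {ι : Type*} [Fintype ι] [DecidableEq ι]
    (t : ι → Tile m) (σ : G.V → ι) (hσ : ∀ v, A.tileOf v = t (σ v)) (j : ι) (n : ℕ)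
    (hsol : ∀ r, IsConstructionSolution t r → r j = 1 / n) : n ≤ G.order := by
  have hrj := hsol _ (A.isConstructionSolution_of_tileOf_eq t σ hσ)
  have hN : 0 < G.order := Fintype.card_pos
  rcases Nat.eq_zero_or_pos n with rfl | hn
  · exact hN.le
  have horder : G.order = #{v | σ v = j} * n := by
    field_simp at hrj
    exact_mod_cast hrj.symm
  exact Nat.le_of_dvd hN (horder ▸ dvd_mul_left n _)

end Assembly

lemma val_finRotate {k : ℕ} (i : Fin k) : (finRotate k i : ℕ) = (i + 1) % k := by
  cases k with
  | zero => exact i.elim0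
  | succ k => rw [finRotate_apply, Fin.val_add, Fin.val_one', Nat.add_mod_mod]

def wheelAssembly (n : ℕ) : Assembly 1 (wheel n) where
  orient
    | Sum.inl i => (none, some i)
    | Sum.inr i => (some i, some (finRotate _ i))
  label _ := 0
  orient_ends := by
    rintro (i | i)
    · rfl
    · exact congrArg (fun j => s(some i, some j)) (Fin.ext (val_finRotate i).symm)

-- `erw` and `dsimp only [wheel]` see through `(wheel n).V` to `Option (Fin (n - 1))`.
lemma wheelAssembly_tileOf_hub (n : ℕ) :
    (wheelAssembly n).tileOf none = Multiset.replicate (n - 1) (Sum.inl 0) := by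
  rw [Assembly.tileOf_eq_replicate (wheelAssembly n) none, card_filter, card_filter]
  erw [Fintype.sum_sum_type, Fintype.sum_sum_type]
  dsimp only [wheel, wheelAssembly]
  simp

lemma wheelAssembly_tileOf_rim (n : ℕ) (j : Fin (n - 1)) :
    (wheelAssembly n).tileOf (some j) = {Sum.inl 0, Sum.inr 0, Sum.inr 0} := by
  rw [Assembly.tileOf_eq_replicate (wheelAssembly n) (some j), card_filter, card_filter]
  erw [Fintype.sum_sum_type, Fintype.sum_sum_type]
  dsimp only [wheel, wheelAssembly]
  simp [← Equiv.eq_symm_apply, -finRotate_apply, Multiset.cons_swap]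

lemma realizes_wheel (n : ℕ) :
    Realizes ({{Sum.inl 0, Sum.inr 0, Sum.inr 0}, Multiset.replicate (n - 1) (Sum.inl 0)} : Pot 1)
      (wheel n) := by
  refine ⟨wheelAssembly n, ?_⟩
  rintro (_ | j)
  · simp [wheelAssembly_tileOf_hub]
  · simp [wheelAssembly_tileOf_rim]

lemma wheel_order {n : ℕ} (hn : 0 < n) : (wheel n).order = n := by
  rw [Multigraph.order]
  erw [Fintype.card_option, Fintype.card_fin]
  omega

/-- For `n ≥ 5` and the pot `{t₁, t₂}` over one bond-edge type with
`t₁ = {a, â, â}` and `t₂ = {a^{n-1}}`, the construction matrix has the unique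
solution `((n-1)/n, 1/n)`, and consequently `m_P = n`. -/
theorem scenario12_pot_matrix (n : ℕ) (hn : 5 ≤ n)
    (t : Fin 2 → Tile 1)
    (ht1 : t 0 = ({Sum.inl 0, Sum.inr 0, Sum.inr 0} : Tile 1))
    (ht2 : t 1 = Multiset.replicate (n - 1) (Sum.inl (0 : Fin 1))) :
    (∀ r : Fin 2 → ℚ,
        ((∀ i : Fin 1, ∑ j, r j * (zval i (t j) : ℚ) = 0) ∧ ∑ j, r j = 1) ↔
          (r 0 = ((n : ℚ) - 1) / (n : ℚ) ∧ r 1 = 1 / (n : ℚ))) ∧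
    mP ({t 0, t 1} : Pot 1) = n := by
  have hsol (r : Fin 2 → ℚ) :
      IsConstructionSolution t r ↔ r 0 = ((n : ℚ) - 1) / n ∧ r 1 = 1 / n := by
    have hz1 : (zval 0 (t 1) : ℚ) = n - 1 := by
      rw [ht2]
      simp [zval, Multiset.count_replicate, Nat.cast_sub (show 1 ≤ n by omega)]
    simpa using isConstructionSolution_iff_of_zval_eq (a := 1) (b := n - 1)
      (by rw [add_sub_cancel]; exact_mod_cast (by omega : n ≠ 0)) (by rw [ht1]; rfl) hz1 r
  have hwheel : ∃ G ∈ CSet ({t 0, t 1} : Pot 1), G.order = n :=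
    ⟨wheel n, by rw [ht1, ht2]; exact realizes_wheel n, wheel_order (by omega)⟩
  refine ⟨hsol, le_antisymm (Nat.sInf_le hwheel) (le_csInf ⟨n, hwheel⟩ ?_)⟩
  rintro _ ⟨G, ⟨A, hA⟩, rfl⟩
  have htile (v : G.V) : ∃ j, A.tileOf v = t j := by
    simpa [Fin.exists_fin_two] using hA v
  choose σ hσ using htile
  exact A.le_order_of_isConstructionSolution t σ hσ 1 n fun r hr => ((hsol r).1 hr).2
end
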